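/- Let R be a commutative noetherian ring of prime characteristic p and I, J ideals with I not contained in the nilradical, I ⊆ √J, J ⊆ √I, and I contained in the Jacobson radical of R. Then s^J(I) ≤ c^J(I), i.e. lim_e μ_J^I(p^e)/p^e ≤ lim_e ν_J^I(p^e)/p^e, where ν_J^I(p^e) = sup{n : I^n ⊄ J^{[p^e]}} and μ_J^I(p^e) = inf{n : J^{[p^e]} ⊄ I^n}. -/

import Mathlib

/-!
Write `μ(q)`, `ν(q)` for the two counting functions. Since `J` is not nil, `J^[q] ≠ 0`, and Krull's
intersection theorem (`I` lies in the Jacobson radical) makes `μ(q)` finite. Raising to `p`-th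
powers turns `J^[q] ⊆ I^(μ(q)-1)` into `J^[qp] ⊆ I^(p(μ(q)-1))`, so `(μ(p^e) - 1) / p^e` increases.
In the other direction, if `I` has `c` generators, every monomial of degree `p(n + c)` in them is a
`p`-th power of a monomial of degree `≥ n` times a leftover; in characteristic `p` this turns
`I^(ν(q)+1) ⊆ J^[q]` into `I^(p(ν(q)+1+c)) ⊆ J^[qp]`, so `(ν(p^e) + C) / p^e` decreases for
`C = 2(c + 1)`. Nakayama gives `μ ≤ ν + 2`, so the increasing sequence stays below the decreasing
one: both converge, with ordered limits, and the shifts by constants do not change the limits.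
-/

open Filter

/-- The `q`-th Frobenius power of an ideal: the ideal generated by `q`-th powers of
elements of `J`. -/
def frobPow {R : Type*} [CommRing R] (J : Ideal R) (q : ℕ) : Ideal R :=
  Ideal.span ((fun x => x ^ q) '' (J : Set R))

theorem le_sum_div_of_mul_add_card_le {ι : Type*} {p n : ℕ} (hp : 0 < p) (s : Finset ι)
    (d : ι → ℕ) (h : p * (n + s.card) ≤ ∑ i ∈ s, d i) : n ≤ ∑ i ∈ s, d i / p := by
  have hsum : ∑ i ∈ s, d i = p * ∑ i ∈ s, d i / p + ∑ i ∈ s, d i % p := by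
    rw [Finset.mul_sum, ← Finset.sum_add_distrib]
    exact Finset.sum_congr rfl fun i _ => (Nat.div_add_mod (d i) p).symm
  have hmod : ∑ i ∈ s, d i % p ≤ p * s.card := by
    simpa [mul_comm] using Finset.sum_le_sum fun i (_ : i ∈ s) => (Nat.mod_lt (d i) hp).le
  have : p * n ≤ p * ∑ i ∈ s, d i / p := by nlinarith
  exact Nat.le_of_mul_le_mul_left this hp

theorem Ideal.iInf_pow_eq_bot_of_le_jacobson {R : Type*} [CommRing R] [IsNoetherianRing R]
    {I : Ideal R} (h : I ≤ (⊥ : Ideal R).jacobson) : ⨅ n : ℕ, I ^ n = ⊥ := by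
  convert I.iInf_pow_smul_eq_bot_of_le_jacobson (M := R) h
  rw [smul_eq_mul, ← Ideal.one_eq_top, mul_one]

section Frobenius

variable {R : Type*} [CommRing R] {I J : Ideal R} {q : ℕ}

theorem le_radical_frobPow (J : Ideal R) (q : ℕ) : J ≤ (frobPow J q).radical :=
  fun x hx => ⟨q, Ideal.subset_span ⟨x, hx, rfl⟩⟩

theorem frobPow_ne_bot (hJ : ¬ J ≤ nilradical R) (q : ℕ) : frobPow J q ≠ ⊥ := by
  obtain ⟨x, hxJ, hx⟩ := SetLike.not_le_iff_exists.mp hJ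
  intro h
  have hxq : x ^ q ∈ frobPow J q := Ideal.subset_span ⟨x, hxJ, rfl⟩
  rw [h, Ideal.mem_bot] at hxq
  exact hx ⟨q, hxq⟩

theorem frobPow_mul_le_pow_mul {s : ℕ} (h : frobPow J q ≤ I ^ s) (k : ℕ) :
    frobPow J (q * k) ≤ I ^ (s * k) := by
  rw [frobPow, Ideal.span_le]
  rintro _ ⟨x, hx, rfl⟩
  change x ^ (q * k) ∈ I ^ (s * k)
  rw [pow_mul, pow_mul]
  exact Ideal.pow_mem_pow (h (Ideal.subset_span ⟨x, hx, rfl⟩)) k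

variable {p : ℕ} [hp : Fact p.Prime] [CharP R p]

theorem pow_mem_frobPow_mul {y : R} (hy : y ∈ frobPow J q) : y ^ p ∈ frobPow J (q * p) := by
  induction hy using Submodule.span_induction with
  | mem _ hx =>
    obtain ⟨x, hx, rfl⟩ := hx
    exact Ideal.subset_span ⟨x, hx, pow_mul x q p⟩
  | zero => simp [zero_pow hp.out.ne_zero]
  | add a b _ _ ha hb => rw [add_pow_char]; exact Ideal.add_mem _ ha hb
  | smul r a _ ha => rw [smul_eq_mul, mul_pow]; exact Ideal.mul_mem_left _ _ ha

theorem prod_pow_mem_frobPow_mul {ι : Type*} {x : ι → R} {n : ℕ}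
    (h : Ideal.span (Set.range x) ^ n ≤ frobPow J q) (s : Finset ι) (d : ι → ℕ)
    (hd : p * (n + s.card) ≤ ∑ i ∈ s, d i) : ∏ i ∈ s, x i ^ d i ∈ frobPow J (q * p) := by
  have hsplit : ∏ i ∈ s, x i ^ d i = (∏ i ∈ s, x i ^ (d i / p)) ^ p * ∏ i ∈ s, x i ^ (d i % p) := by
    rw [← Finset.prod_pow, ← Finset.prod_mul_distrib]
    refine Finset.prod_congr rfl fun i _ => ?_
    rw [← pow_mul, ← pow_add, Nat.div_add_mod']
  have hmem : ∏ i ∈ s, x i ^ (d i / p) ∈ Ideal.span (Set.range x) ^ n := by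
    refine Ideal.pow_le_pow_right (le_sum_div_of_mul_add_card_le hp.out.pos s d hd) ?_
    rw [← Finset.prod_pow_eq_pow_sum]
    exact Ideal.prod_mem_prod fun i _ =>
      Ideal.pow_mem_pow (Ideal.subset_span (Set.mem_range_self i)) _
  rw [hsplit]
  exact Ideal.mul_mem_right _ _ (pow_mem_frobPow_mul (h hmem))

theorem span_range_pow_le_frobPow_mul {ι : Type*} [Fintype ι] {x : ι → R} {n : ℕ}
    (h : Ideal.span (Set.range x) ^ n ≤ frobPow J q) :
    Ideal.span (Set.range x) ^ (p * (n + Fintype.card ι)) ≤ frobPow J (q * p) := by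
  intro y hy
  obtain ⟨φ, hφ, rfl⟩ := (Ideal.mem_span_pow_iff_exists_isHomogeneous x y).mp hy
  rw [MvPolynomial.eval_eq]
  refine Ideal.sum_mem _ fun d hd => Ideal.mul_mem_left _ _ (prod_pow_mem_frobPow_mul h _ _ ?_)
  rw [← hφ.degree_eq_sum_deg_support hd]
  gcongr
  exact Finset.card_le_univ _

theorem exists_pow_mul_le_frobPow_mul (J : Ideal R) (hI : I.FG) :
    ∃ c, ∀ q n, I ^ n ≤ frobPow J q → I ^ (p * (n + c)) ≤ frobPow J (q * p) := by
  obtain ⟨c, x, rfl⟩ := Submodule.fg_iff_exists_fin_generating_family.mp hI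
  exact ⟨c, fun q n h => by simpa using span_range_pow_le_frobPow_mul (p := p) h⟩

end Frobenius

section Thresholds

variable {R : Type*} [CommRing R] {I J : Ideal R} {q : ℕ}

/-- `μ_J^I(q)`; it is `sInf ∅ = 0` exactly when `J^[q]` lies in every power of `I`. -/
noncomputable def frobMu (I J : Ideal R) (q : ℕ) : ℕ := sInf {n | ¬ frobPow J q ≤ I ^ n}

/-- `ν_J^I(q)`; it is `sSup ∅ = 0` when `J^[q] = ⊤`. -/
noncomputable def frobNu (I J : Ideal R) (q : ℕ) : ℕ := sSup {n | ¬ I ^ n ≤ frobPow J q}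

theorem frobPow_le_pow_frobMu_sub_one (I J : Ideal R) (q : ℕ) :
    frobPow J q ≤ I ^ (frobMu I J q - 1) := by
  by_contra h
  have hle : frobMu I J q ≤ frobMu I J q - 1 := Nat.sInf_le h
  have hpos : frobMu I J q ≠ 0 := fun h0 => by simp [h0] at h
  omega

theorem frobNu_le_of_pow_le {N : ℕ} (h : I ^ N ≤ frobPow J q) : frobNu I J q ≤ N :=
  csSup_le' fun n hn => by
    by_contra hlt
    exact hn ((Ideal.pow_le_pow_right (not_le.mp hlt).le).trans h)

variable [IsNoetherianRing R]

theorem lt_frobMu_of_frobPow_le (hjac : I ≤ (⊥ : Ideal R).jacobson) (hJ : frobPow J q ≠ ⊥)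
    {s : ℕ} (h : frobPow J q ≤ I ^ s) : s < frobMu I J q := by
  have hne : {n | ¬ frobPow J q ≤ I ^ n}.Nonempty := by
    by_contra hemp
    refine hJ (eq_bot_iff.mpr ?_)
    rw [← Ideal.iInf_pow_eq_bot_of_le_jacobson hjac]
    exact le_iInf fun n => by_contra fun hn => hemp ⟨n, hn⟩
  by_contra hs
  exact Nat.sInf_mem hne (h.trans (Ideal.pow_le_pow_right (not_lt.mp hs)))

theorem pow_frobNu_add_one_le (hIJ : I ≤ J.radical) (q : ℕ) :
    I ^ (frobNu I J q + 1) ≤ frobPow J q := by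
  have hrad : I ≤ (frobPow J q).radical := by
    simpa only [Ideal.radical_idem] using hIJ.trans (Ideal.radical_mono (le_radical_frobPow J q))
  obtain ⟨m, hm⟩ := Ideal.exists_pow_le_of_le_radical_of_fg hrad (IsNoetherian.noetherian I)
  have hbdd : BddAbove {n | ¬ I ^ n ≤ frobPow J q} :=
    ⟨m, fun n hn => not_lt.mp fun hlt => hn ((Ideal.pow_le_pow_right hlt.le).trans hm)⟩
  by_contra h
  exact Nat.not_succ_le_self _ (le_csSup hbdd h)

theorem frobMu_mul_sub_one_le (hjac : I ≤ (⊥ : Ideal R).jacobson) {k : ℕ}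
    (hJ : frobPow J (q * k) ≠ ⊥) : k * (frobMu I J q - 1) ≤ frobMu I J (q * k) - 1 := by
  rw [mul_comm]
  exact Nat.le_sub_one_of_lt (lt_frobMu_of_frobPow_le hjac hJ
    (frobPow_mul_le_pow_mul (frobPow_le_pow_frobMu_sub_one I J q) k))

theorem frobNu_mul_add_le {k c : ℕ} (hk : 2 ≤ k) (hIJ : I ≤ J.radical)
    (hc : ∀ n, I ^ n ≤ frobPow J q → I ^ (k * (n + c)) ≤ frobPow J (q * k)) :
    frobNu I J (q * k) + 2 * (c + 1) ≤ k * (frobNu I J q + 2 * (c + 1)) := by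
  have := frobNu_le_of_pow_le (hc _ (pow_frobNu_add_one_le hIJ q))
  nlinarith

-- If `μ ≥ ν + 3` then `I^(ν+1) ⊆ J^[q] ⊆ I^(ν+2)`, so `I^(ν+1) = 0` by Nakayama,
-- and then `J^[q] ⊆ I^μ`.
theorem frobMu_le_frobNu_add_two (hjac : I ≤ (⊥ : Ideal R).jacobson) (hIJ : I ≤ J.radical)
    (q : ℕ) : frobMu I J q ≤ frobNu I J q + 2 := by
  by_contra! h
  set ν := frobNu I J q
  have hstable : I ^ (ν + 1) ≤ I • I ^ (ν + 1) := by
    rw [smul_eq_mul, ← pow_succ']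
    exact (pow_frobNu_add_one_le hIJ q).trans
      ((frobPow_le_pow_frobMu_sub_one I J q).trans (Ideal.pow_le_pow_right (by omega)))
  have hzero : I ^ (ν + 1) = ⊥ :=
    Submodule.eq_bot_of_le_smul_of_le_jacobson_bot I _ (IsNoetherian.noetherian _) hstable hjac
  have hsub : frobPow J q ≤ I ^ frobMu I J q := by
    calc frobPow J q ≤ I ^ (frobMu I J q - 1) := frobPow_le_pow_frobMu_sub_one I J q
      _ ≤ I ^ (ν + 1) := Ideal.pow_le_pow_right (by omega)
      _ = ⊥ := hzero
      _ ≤ _ := bot_le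
  exact Nat.sInf_mem (Nat.nonempty_of_pos_sInf (show 0 < frobMu I J q by omega)) hsub

end Thresholds

section Sequences

variable {r : ℝ}

theorem monotone_div_pow_of_mul_le (hr : 0 < r) {a : ℕ → ℝ} (h : ∀ e, r * a e ≤ a (e + 1)) :
    Monotone fun e => a e / r ^ e :=
  monotone_nat_of_le_succ fun e =>
    calc a e / r ^ e = r * a e / r ^ (e + 1) := by field_simp; ring
      _ ≤ a (e + 1) / r ^ (e + 1) := by gcongr; exact h e

theorem antitone_div_pow_of_le_mul (hr : 0 < r) {a : ℕ → ℝ} (h : ∀ e, a (e + 1) ≤ r * a e) :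
    Antitone fun e => a e / r ^ e :=
  antitone_nat_of_succ_le fun e =>
    calc a (e + 1) / r ^ (e + 1) ≤ r * a e / r ^ (e + 1) := by gcongr; exact h e
      _ = a e / r ^ e := by field_simp; ring

theorem exists_tendsto_of_monotone_of_antitone_of_le {f g : ℕ → ℝ} (hf : Monotone f)
    (hg : Antitone g) (hfg : f ≤ g) :
    ∃ a b, Tendsto f atTop (nhds a) ∧ Tendsto g atTop (nhds b) ∧ a ≤ b := by
  have hfa := tendsto_atTop_ciSup hf ⟨g 0, by
    rintro _ ⟨e, rfl⟩
    exact (hfg e).trans (hg (Nat.zero_le e))⟩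
  have hgb := tendsto_atTop_ciInf hg ⟨f 0, by
    rintro _ ⟨e, rfl⟩
    exact (hf (Nat.zero_le e)).trans (hfg e)⟩
  exact ⟨_, _, hfa, hgb, le_of_tendsto_of_tendsto' hfa hgb hfg⟩

theorem Filter.Tendsto.add_const_div_pow (hr : 1 < r) {a : ℕ → ℝ} {L : ℝ}
    (h : Tendsto (fun e => a e / r ^ e) atTop (nhds L)) (c : ℝ) :
    Tendsto (fun e => (a e + c) / r ^ e) atTop (nhds L) := by
  have hc : Tendsto (fun e => c / r ^ e) atTop (nhds 0) :=
    tendsto_const_nhds.div_atTop (tendsto_pow_atTop_atTop_of_one_lt hr)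
  simpa only [add_div, add_zero] using h.add hc

end Sequences

theorem sThreshold_le_fThreshold {R : Type*} [CommRing R] [IsNoetherianRing R] (p : ℕ)
    [hp : Fact p.Prime] [CharP R p] (I J : Ideal R)
    (hInil : ¬ I ≤ nilradical R)
    (hIJ : I ≤ J.radical)
    (hjac : I ≤ (⊥ : Ideal R).jacobson) :
    ∃ sJI cJI : ℝ,
      Tendsto
        (fun e : ℕ =>
          ((sInf {n : ℕ | ¬ frobPow J (p ^ e) ≤ I ^ n} : ℕ) : ℝ) / (p : ℝ) ^ e)
        atTop (nhds sJI) ∧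
      Tendsto
        (fun e : ℕ =>
          ((sSup {n : ℕ | ¬ I ^ n ≤ frobPow J (p ^ e)} : ℕ) : ℝ) / (p : ℝ) ^ e)
        atTop (nhds cJI) ∧
      sJI ≤ cJI := by
  have hJ : ¬ J ≤ nilradical R := fun hJ =>
    hInil (hIJ.trans (by simpa [nilradical, Ideal.radical_idem] using Ideal.radical_mono hJ))
  have hJq := frobPow_ne_bot hJ
  obtain ⟨c, hc⟩ := exists_pow_mul_le_frobPow_mul (p := p) J (IsNoetherian.noetherian I)
  set C := 2 * (c + 1)
  set a : ℕ → ℝ := fun e => ((frobMu I J (p ^ e) - 1 : ℕ) : ℝ)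
  set b : ℕ → ℝ := fun e => ((frobNu I J (p ^ e) + C : ℕ) : ℝ)
  have hp1 : (1 : ℝ) < p := by exact_mod_cast hp.out.one_lt
  have ha : ∀ e, (p : ℝ) * a e ≤ a (e + 1) := fun e => by
    simp only [a, pow_succ]
    exact_mod_cast frobMu_mul_sub_one_le hjac (hJq _)
  have hb : ∀ e, b (e + 1) ≤ p * b e := fun e => by
    simp only [b, pow_succ]
    exact_mod_cast frobNu_mul_add_le hp.out.two_le hIJ (hc _)
  have hab : ∀ e, a e ≤ b e := fun e => by
    have := frobMu_le_frobNu_add_two hjac hIJ (p ^ e)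
    simp only [a, b]
    exact_mod_cast (by omega)
  obtain ⟨s, t, hs, ht, hst⟩ := exists_tendsto_of_monotone_of_antitone_of_le
    (monotone_div_pow_of_mul_le (by positivity) ha) (antitone_div_pow_of_le_mul (by positivity) hb)
    (fun e => by gcongr; exact hab e)
  refine ⟨s, t, (hs.add_const_div_pow hp1 1).congr fun e => ?_,
    (ht.add_const_div_pow hp1 (-C)).congr fun e => ?_, hst⟩
  · have := lt_frobMu_of_frobPow_le hjac (hJq (p ^ e)) (s := 0) (by simp)
    simp only [a, Nat.cast_sub this, Nat.cast_one, sub_add_cancel]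
    rfl
  · simp only [b, Nat.cast_add, add_neg_cancel_right]
    rfl
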